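/- Let (A,B,R,σ) be a normalized context whose concept lattice M satisfies the ascending chain condition, and let {(A_λ,B_λ)}_{λ∈Λ} be a decomposition of (A,B,R,σ) into independent subcontexts. Then for every concept ⟨g,f⟩∈M with g ≠ g_⊤ and g ≠ g_⊥, there exists λ∈Λ such that ⟨g,f⟩ equals the infimum in M of the set M_g^{A_λ}, and M_g^{A∖A_λ} is empty. -/
import Mathlib


/-- A multi-adjoint frame together with a formal context `(A, B, R, σ)`.
`conj i`, `limp i`, `rimp i` form an adjoint triple on the complete lattice `L` for each
index `i : I`, and each conjunctor satisfies the boundary condition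
`x & ⊤ = ⊤ & x = x`. -/
structure FCAContext (L : Type*) [CompleteLattice L] (I A B : Type*) where
  conj : I → L → L → L
  limp : I → L → L → L
  rimp : I → L → L → L
  R : A → B → L
  sig : A → B → I
  adjoint_left : ∀ i x y z, x ≤ limp i z y ↔ conj i x y ≤ z
  adjoint_right : ∀ i x y z, conj i x y ≤ z ↔ y ≤ rimp i z x
  boundary_left : ∀ i x, conj i ⊤ x = x
  boundary_right : ∀ i x, conj i x ⊤ = x

namespace FCAContext

variable {L I A B : Type*} [CompleteLattice L]

open Classical in
/-- The fuzzy-attribute `φ_{a,x}`. -/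
noncomputable def phiA (a : A) (x : L) : A → L :=
  fun a' => if a' = a then x else ⊥

open Classical in
/-- The fuzzy-object `φ_{b,y}`. -/
noncomputable def phiB (b : B) (y : L) : B → L :=
  fun b' => if b' = b then y else ⊥

/-- The pair `⟨g_⊤, f_⊥⟩` (the top of the concept lattice of a normalized context). -/
def topC : (B → L) × (A → L) := (fun _ => (⊤ : L), fun _ => (⊥ : L))

/-- The pair `⟨g_⊥, f_⊤⟩` (the bottom of the concept lattice of a normalized context). -/
def botC : (B → L) × (A → L) := (fun _ => (⊥ : L), fun _ => (⊤ : L))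

/-- The order on concepts: `⟨g₁,f₁⟩ ⪯ ⟨g₂,f₂⟩ iff g₁ ≤ g₂` pointwise. -/
def cle (c d : (B → L) × (A → L)) : Prop := c.1 ≤ d.1

variable (C : FCAContext L I A B)

/-- The derivation operator `↑` on fuzzy sets of objects:
`g↑(a) = ⨅_b R(a,b) ↙^{σ(a,b)} g(b)`. -/
def up (g : B → L) : A → L := fun a => ⨅ b, C.limp (C.sig a b) (C.R a b) (g b)

/-- The derivation operator `↓` on fuzzy sets of attributes:
`f↓(b) = ⨅_a R(a,b) ↖_{σ(a,b)} f(a)`. -/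
def down (f : A → L) : B → L := fun b => ⨅ a, C.rimp (C.sig a b) (C.R a b) (f a)

/-- The concept lattice `M`: pairs `⟨g, f⟩` with `g↑ = f` and `f↓ = g`. -/
def concepts : Set ((B → L) × (A → L)) :=
  {c | C.up c.1 = c.2 ∧ C.down c.2 = c.1}

/-- The pair `⟨φ_{a,x}↓, φ_{a,x}↓↑⟩` generated by a fuzzy-attribute. -/
noncomputable def attrConcept (a : A) (x : L) : (B → L) × (A → L) :=
  (C.down (phiA a x), C.up (C.down (phiA a x)))

/-- The pair `⟨φ_{b,y}↑↓, φ_{b,y}↑⟩` generated by a fuzzy-object. -/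
noncomputable def objConcept (b : B) (y : L) : (B → L) × (A → L) :=
  (C.down (C.up (phiB b y)), C.up (phiB b y))

/-- A context is *normalized* when every attribute is related to some object with a
non-bottom value and to some object with the bottom value, and symmetrically for
objects. -/
def Normalized : Prop :=
  (∀ a : A, ∃ b : B, C.R a b ≠ ⊥) ∧ (∀ a : A, ∃ b : B, C.R a b = ⊥) ∧
  (∀ b : B, ∃ a : A, C.R a b ≠ ⊥) ∧ (∀ b : B, ∃ a : A, C.R a b = ⊥)

/-- The conjunctor associated with the index `i` has no zero-divisors. -/
def NoZeroDiv (i : I) : Prop :=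
  ∀ x y : L, x ≠ ⊥ → y ≠ ⊥ → C.conj i x y ≠ ⊥

/-- `(Y, X)` is a *separable subcontext* of the context. -/
def SeparableSubcontext (Y : Set A) (X : Set B) : Prop :=
  Y.Nonempty ∧ X.Nonempty ∧ Y ≠ Set.univ ∧ X ≠ Set.univ ∧
  (∃ a ∈ Y, ∃ b ∈ X, C.R a b ≠ ⊥) ∧
  (∀ a ∈ Y, ∀ b ∉ X, C.R a b = ⊥) ∧
  (∀ a ∉ Y, ∀ b ∈ X, C.R a b = ⊥)

/-- A family `{(Afam l, Bfam l)}_{l : Λ}` is a *decomposition into independent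
subcontexts* of the context. -/
def SubcontextDecomposition {Λ : Type*} (Afam : Λ → Set A) (Bfam : Λ → Set B) : Prop :=
  Nonempty Λ ∧
  (∀ l, C.SeparableSubcontext (Afam l) (Bfam l)) ∧
  (∀ l m, l ≠ m → Disjoint (Afam l) (Afam m)) ∧
  (∀ l m, l ≠ m → Disjoint (Bfam l) (Bfam m)) ∧
  (⋃ l, Afam l) = Set.univ ∧ (⋃ l, Bfam l) = Set.univ ∧
  (∀ l, ∀ a ∉ Afam l, ∀ b ∈ Bfam l, C.NoZeroDiv (C.sig a b)) ∧
  (∀ l, ∀ a ∈ Afam l, ∀ b ∉ Bfam l, C.NoZeroDiv (C.sig a b))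

/-- The meet of two concepts in the concept lattice: the extent is the pointwise
infimum of the extents. -/
def cmeet (c d : (B → L) × (A → L)) : (B → L) × (A → L) :=
  (c.1 ⊓ d.1, C.up (c.1 ⊓ d.1))

/-- The join of two concepts in the concept lattice: the intent is the pointwise
infimum of the intents. -/
def cjoin (c d : (B → L) × (A → L)) : (B → L) × (A → L) :=
  (C.down (c.2 ⊓ d.2), c.2 ⊓ d.2)

/-- A concept is *meet-irreducible* in the concept lattice `M` if it is not the top of
`M` (its extent is not `g_⊤`) and whenever it is the meet of two concepts it equals one
of them. -/
def MeetIrred (m : (B → L) × (A → L)) : Prop :=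
  m ∈ C.concepts ∧ m.1 ≠ (fun _ => (⊤ : L)) ∧
  ∀ c d, c ∈ C.concepts → d ∈ C.concepts → m.1 = c.1 ⊓ d.1 → m = c ∨ m = d

/-- `M_F^{A'}`: the meet-irreducible concepts generated by fuzzy-attributes with
attribute in `A'`. -/
noncomputable def MF (A' : Set A) : Set ((B → L) × (A → L)) :=
  {m | C.MeetIrred m ∧ ∃ a ∈ A', ∃ x : L, m = C.attrConcept a x}

/-- `M_g^{A'}`: the elements of `M_F^{A'}` above the concept with extent `g`. -/
noncomputable def Mg (g : B → L) (A' : Set A) : Set ((B → L) × (A → L)) :=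
  {m ∈ C.MF A' | g ≤ m.1}

/-- The concept lattice satisfies the ascending chain condition. -/
def ACC : Prop :=
  ∀ c : ℕ → (B → L) × (A → L), (∀ n, c n ∈ C.concepts) →
    (∀ n, cle (c n) (c (n + 1))) → ∃ n, ∀ m, n ≤ m → c m = c n

/-- `K` is a *block of concepts* of the concept lattice `M`: a sublattice of `M`,
different from `M`, containing some concept other than the top `⟨g_⊤,f_⊥⟩` and the
bottom `⟨g_⊥,f_⊤⟩`, and closed under comparability except for the top and the bottom. -/
def IsBlockM (K : Set ((B → L) × (A → L))) : Prop :=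
  K ⊆ C.concepts ∧ K ≠ C.concepts ∧
  (K \ ({topC, botC} : Set ((B → L) × (A → L)))).Nonempty ∧
  (∀ c ∈ K, ∀ d ∈ K, C.cmeet c d ∈ K ∧ C.cjoin c d ∈ K) ∧
  ∀ k ∈ K \ ({topC, botC} : Set ((B → L) × (A → L))), ∀ c ∈ C.concepts,
    (cle k c ∨ cle c k) →
    c ∉ ({topC, botC} : Set ((B → L) × (A → L))) → c ∈ K

/-- A complete block of concepts: a block containing the top and the bottom of `M`. -/
def IsCompleteBlockM (K : Set ((B → L) × (A → L))) : Prop :=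
  C.IsBlockM K ∧ topC ∈ K ∧ botC ∈ K

/-- A family `{K l}_{l : Λ}` is a *decomposition into independent blocks* of the
concept lattice `M`. -/
def BlockDecomposition {Λ : Type*} (K : Λ → Set ((B → L) × (A → L))) : Prop :=
  Nonempty Λ ∧ (∀ l, C.IsBlockM (K l)) ∧
  (∀ l m, l ≠ m → K l ∩ K m ⊆ ({topC, botC} : Set ((B → L) × (A → L)))) ∧
  (⋃ l, K l) = C.concepts

/-- The block of concepts `K_λ` determined by a set of attributes `A'`:
the concepts which are the infimum of `M_g^{A'}`, together with the top and the
bottom of `M`. -/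
noncomputable def Kblock (A' : Set A) : Set ((B → L) × (A → L)) :=
  {c ∈ C.concepts | c.1 = ⨅ m ∈ C.Mg c.1 A', m.1} ∪
    ({topC, botC} : Set ((B → L) × (A → L)))

/-- The set of attributes `A_μ` associated with a block of concepts `K`. -/
noncomputable def Amu (K : Set ((B → L) × (A → L))) : Set A :=
  {a | ∃ x : L, C.attrConcept a x ∈
    K \ ({topC, botC} : Set ((B → L) × (A → L)))}

/-- The set of objects `B_μ` associated with a block of concepts `K`. -/
noncomputable def Bmu (K : Set ((B → L) × (A → L))) : Set B :=
  {b | ∃ y : L, C.objConcept b y ∈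
    K \ ({topC, botC} : Set ((B → L) × (A → L)))}

/-- Completely meet-irreducible (auxiliary): whenever the extent of `m` is the
pointwise infimum of the extents of a set of concepts, `m` belongs to the set. -/
def CMI (m : (B → L) × (A → L)) : Prop :=
  ∀ S ⊆ C.concepts, m.1 = (⨅ d ∈ S, d.1) → m ∈ S

lemma gc' (g : B → L) (f : A → L) : g ≤ C.down f ↔ f ≤ C.up g := by
  constructor
  · intro h a
    show f a ≤ ⨅ b, C.limp (C.sig a b) (C.R a b) (g b)
    refine le_iInf fun b => ?_
    rw [C.adjoint_left]
    exact (C.adjoint_right _ _ _ _).mpr ((h b).trans (iInf_le _ a))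
  · intro h b
    show g b ≤ ⨅ a, C.rimp (C.sig a b) (C.R a b) (f a)
    refine le_iInf fun a => ?_
    exact (C.adjoint_right _ _ _ _).mp ((C.adjoint_left _ _ _ _).mp ((h a).trans (iInf_le _ b)))

lemma le_down_up (g : B → L) : g ≤ C.down (C.up g) := (C.gc' _ _).mpr le_rfl

lemma le_up_down (f : A → L) : f ≤ C.up (C.down f) := (C.gc' _ _).mp le_rfl

lemma down_anti {f₁ f₂ : A → L} (h : f₁ ≤ f₂) : C.down f₂ ≤ C.down f₁ :=
  (C.gc' _ _).mpr (h.trans (C.le_up_down f₂))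

lemma down_up_down (f : A → L) : C.down (C.up (C.down f)) = C.down f :=
  le_antisymm (C.down_anti (C.le_up_down f)) (C.le_down_up _)

lemma attr_mem (a : A) (x : L) : C.attrConcept a x ∈ C.concepts :=
  ⟨rfl, C.down_up_down _⟩

lemma rimp_bot (i : I) (z : L) : C.rimp i z ⊥ = ⊤ :=
  eq_top_iff.mpr ((C.adjoint_right i ⊥ ⊤ z).mp (by rw [C.boundary_right]; exact bot_le))

lemma down_phiA (a : A) (x : L) (b : B) :
    C.down (phiA a x) b = C.rimp (C.sig a b) (C.R a b) x := by
  apply le_antisymm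
  · exact (iInf_le _ a).trans (le_of_eq (by simp [phiA]))
  · refine le_iInf fun a' => ?_
    by_cases h : a' = a
    · subst h; simp [phiA]
    · simp [phiA, h, C.rimp_bot]

/-- Every completely meet-irreducible concept is an attribute concept and is
meet-irreducible. -/
lemma CMI_attr (m : (B → L) × (A → L)) (hm : m ∈ C.concepts) (hcmi : C.CMI m) :
    (∃ a x, m = C.attrConcept a x) ∧ C.MeetIrred m := by
  constructor
  · have hsub : Set.range (fun a => C.attrConcept a (m.2 a)) ⊆ C.concepts := by
      rintro c ⟨a, rfl⟩; exact C.attr_mem a (m.2 a)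
    have hdecmp : m.1 = ⨅ d ∈ Set.range (fun a => C.attrConcept a (m.2 a)), d.1 := by
      rw [iInf_range]
      funext b
      have h1 : m.1 b = C.down m.2 b := by rw [hm.2]
      rw [h1]
      show (⨅ a, C.rimp (C.sig a b) (C.R a b) (m.2 a)) = _
      rw [iInf_apply]
      exact iInf_congr fun a => (C.down_phiA a (m.2 a) b).symm
    obtain ⟨a, ha⟩ := hcmi _ hsub hdecmp
    exact ⟨a, m.2 a, ha.symm⟩
  · refine ⟨hm, ?_, ?_⟩
    · intro htop
      refine absurd (hcmi ∅ (Set.empty_subset _) ?_) (Set.notMem_empty m)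
      rw [htop]; simp [Pi.top_def]
    · intro c d hc hd heq
      have hmem := hcmi {c, d} (by rintro x (rfl | rfl) <;> assumption)
        (by rw [iInf_pair]; exact heq)
      simpa using hmem

/-- In a concept lattice satisfying ACC, every nonempty set of concepts has a
maximal element. -/
lemma exists_maximal (hacc : C.ACC) (S : Set ((B → L) × (A → L))) (hS : S ⊆ C.concepts)
    (hne : S.Nonempty) : ∃ c ∈ S, ∀ d ∈ S, cle c d → c = d := by
  by_contra hcon
  push_neg at hcon
  have step : ∀ p : {c // c ∈ S}, ∃ q : {c // c ∈ S}, cle p.1 q.1 ∧ p.1 ≠ q.1 := by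
    rintro ⟨c, hc⟩
    obtain ⟨d, hd, hle, hne'⟩ := hcon c hc
    exact ⟨⟨d, hd⟩, hle, hne'⟩
  choose F hF1 hF2 using step
  obtain ⟨c0, hc0⟩ := hne
  set seq : ℕ → {c // c ∈ S} := fun n => F^[n] ⟨c0, hc0⟩ with hseq
  have hsucc : ∀ n, seq (n + 1) = F (seq n) := fun n => Function.iterate_succ_apply' F n _
  obtain ⟨n, hn'⟩ := hacc (fun n => (seq n).1) (fun n => hS (seq n).2)
    (fun n => by simp only [hsucc]; exact hF1 _)
  have h1 := hn' (n + 1) (Nat.le_succ n)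
  rw [hsucc] at h1
  exact hF2 (seq n) h1.symm

/-- In a concept lattice satisfying ACC, the extent of every concept is the infimum
of the extents of the completely meet-irreducible concepts above it. -/
lemma extent_eq_iInf_CMI (hacc : C.ACC) (c : (B → L) × (A → L)) (hc : c ∈ C.concepts) :
    c.1 = ⨅ m ∈ {m | m ∈ C.concepts ∧ C.CMI m ∧ c.1 ≤ m.1}, m.1 := by
  by_contra h0
  set S₀ : Set ((B → L) × (A → L)) :=
    {c | c ∈ C.concepts ∧ c.1 ≠ ⨅ m ∈ {m | m ∈ C.concepts ∧ C.CMI m ∧ c.1 ≤ m.1}, m.1}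
    with hS₀
  obtain ⟨e, ⟨he, hbad⟩, hmax⟩ := C.exists_maximal hacc S₀ (fun x hx => hx.1) ⟨c, hc, h0⟩
  have hnotCMI : ¬ C.CMI e := by
    intro hcmi
    refine hbad (le_antisymm (le_iInf₂ fun m hm => hm.2.2) ?_)
    exact iInf₂_le e ⟨he, hcmi, le_rfl⟩
  rw [CMI] at hnotCMI
  push_neg at hnotCMI
  obtain ⟨S', hS'sub, hS'eq, heS'⟩ := hnotCMI
  refine hbad (le_antisymm (le_iInf₂ fun m hm => hm.2.2) ?_)
  have hkey : ∀ d ∈ S',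
      (⨅ m ∈ {m | m ∈ C.concepts ∧ C.CMI m ∧ e.1 ≤ m.1}, m.1) ≤ d.1 := by
    intro d hd
    have hde : e.1 ≤ d.1 := by rw [hS'eq]; exact iInf₂_le d hd
    have hdgood : d.1 = ⨅ m ∈ {m | m ∈ C.concepts ∧ C.CMI m ∧ d.1 ≤ m.1}, m.1 := by
      by_contra hdbad
      have hed : e = d := hmax d ⟨hS'sub hd, hdbad⟩ hde
      rw [hed] at heS'
      exact heS' hd
    calc (⨅ m ∈ {m | m ∈ C.concepts ∧ C.CMI m ∧ e.1 ≤ m.1}, m.1)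
        ≤ ⨅ m ∈ {m | m ∈ C.concepts ∧ C.CMI m ∧ d.1 ≤ m.1}, m.1 :=
          biInf_mono fun m hm => ⟨hm.1, hm.2.1, hde.trans hm.2.2⟩
      _ = d.1 := hdgood.symm
  calc (⨅ m ∈ {m | m ∈ C.concepts ∧ C.CMI m ∧ e.1 ≤ m.1}, m.1)
      ≤ ⨅ d ∈ S', d.1 := le_iInf₂ hkey
    _ = e.1 := hS'eq.symm

/-- Zero-divisor argument: an attribute concept above `g` whose attribute lies outside
the subcontext carrying a non-bottom value of `g` must be the top extent. -/
lemma attr_not_above {g : B → L} {a : A} {b₀ : B} {x : L}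
    (hR : C.R a b₀ = ⊥) (hnz : C.NoZeroDiv (C.sig a b₀))
    (hgb : g b₀ ≠ ⊥) (hge : g ≤ (C.attrConcept a x).1) :
    (C.attrConcept a x).1 = fun _ => ⊤ := by
  have h1 : g b₀ ≤ C.rimp (C.sig a b₀) (C.R a b₀) x := by
    have h := hge b₀
    rwa [show (C.attrConcept a x).1 b₀ = _ from C.down_phiA a x b₀] at h
  have h2 : C.conj (C.sig a b₀) x (g b₀) ≤ C.R a b₀ := (C.adjoint_right _ _ _ _).mpr h1
  rw [hR, le_bot_iff] at h2
  have hx : x = ⊥ := by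
    by_contra hx
    exact hnz x (g b₀) hx hgb h2
  funext b
  rw [show (C.attrConcept a x).1 b = _ from C.down_phiA a x b, hx, C.rimp_bot]

end FCAContext

/-- Let `(A,B,R,σ)` be a normalized context whose concept lattice
satisfies the ascending chain condition, with a decomposition into independent
subcontexts `{(Afam l, Bfam l)}`. Then every concept `⟨g,f⟩` with `g ≠ g_⊤` and
`g ≠ g_⊥` is the infimum in the concept lattice of `M_g^{Afam l}` for some `l`, and
`M_g^{A ∖ Afam l}` is empty. -/
theorem FCAContext.concept_is_inf_of_irreducibles_of_one_subcontext
    {L I A B : Type*} [CompleteLattice L] [Finite I] [Nonempty I]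
    [Nonempty A] [Nonempty B] (C : FCAContext L I A B)
    (hn : C.Normalized) (hacc : C.ACC)
    {Λ : Type*} (Afam : Λ → Set A) (Bfam : Λ → Set B)
    (hdec : C.SubcontextDecomposition Afam Bfam) :
    ∀ (g : B → L) (f : A → L), (g, f) ∈ C.concepts →
      g ≠ (fun _ => (⊤ : L)) → g ≠ (fun _ => (⊥ : L)) →
      ∃ l, g = (⨅ m ∈ C.Mg g (Afam l), m.1) ∧ C.Mg g ((Afam l)ᶜ) = ∅ := by
  intro g f hgf hgtop hgbot
  obtain ⟨hΛ, hsep, _, _, _, hBu, hnzd, _⟩ := hdec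
  obtain ⟨b₀, hb₀⟩ := Function.ne_iff.mp hgbot
  have hb₀u : b₀ ∈ ⋃ l, Bfam l := hBu ▸ Set.mem_univ b₀
  obtain ⟨l, hbl⟩ := Set.mem_iUnion.mp hb₀u
  refine ⟨l, ?_, ?_⟩
  · have hrep := C.extent_eq_iInf_CMI hacc (g, f) hgf
    have sub : ∀ m, m ∈ {m | m ∈ C.concepts ∧ C.CMI m ∧ (g, f).1 ≤ m.1} →
        m ∈ C.Mg g (Afam l) := by
      intro m hm
      obtain ⟨hmc, hcmi, hgm⟩ := hm
      obtain ⟨⟨a, x, hax⟩, hirr⟩ := C.CMI_attr m hmc hcmi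
      refine ⟨⟨hirr, a, ?_, x, hax⟩, hgm⟩
      by_contra hal
      refine hirr.2.1 ?_
      rw [hax]
      exact C.attr_not_above ((hsep l).2.2.2.2.2.2 a hal b₀ hbl) (hnzd l a hal b₀ hbl)
        hb₀ (hax ▸ hgm)
    apply le_antisymm (le_iInf₂ fun m hm => hm.2)
    calc (⨅ m ∈ C.Mg g (Afam l), m.1)
        ≤ ⨅ m ∈ {m | m ∈ C.concepts ∧ C.CMI m ∧ (g, f).1 ≤ m.1}, m.1 := biInf_mono sub
      _ = g := hrep.symm
  · rw [Set.eq_empty_iff_forall_notMem]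
    rintro m ⟨⟨hirr, a, hal, x, hax⟩, hgm⟩
    refine hirr.2.1 ?_
    rw [hax]
    exact C.attr_not_above ((hsep l).2.2.2.2.2.2 a hal b₀ hbl) (hnzd l a hal b₀ hbl)
      hb₀ (hax ▸ hgm)
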